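/- Let N ≥ 1 and define f̃ : ℝ^{N×(N+1)} → ℝ^N componentwise by f̃_i(z) = z_{N,1}(z_{i,1} − z_{N,1}) for 1 ≤ i ≤ N−1 and f̃_N(z) = (1/2) z_{N,1}², where z_{i,j} denotes the (i,j) entry of z. Then for every z ∈ ℝ^{N×(N+1)}: (i) for each k = 1, …, N, f̃_k(z) ≤ (1/2) z_{k,1}² ≤ (1/2)|e_kᵀ z|², where e_k is the k-th standard basis vector of ℝ^N; and (ii) with a = (1/N, …, 1/N) ∈ ℝ^N, aᵀ f̃(z) ≤ (1/2)|aᵀ z|². -/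
import Mathlib


open Matrix

/-- The transformed driver `f̃` of the equilibrium BSDE system (here `N = n + 1`,
indices `1, …, N` correspond to `Fin (n+1)` and the `N`-th component is
`Fin.last n`; the first column of `z` has index `0`):
`f̃_i(z) = z_{N,1} (z_{i,1} - z_{N,1})` for `i < N` and `f̃_N(z) = (1/2) z_{N,1}²`. -/
noncomputable def ftil (n : ℕ) (z : Matrix (Fin (n + 1)) (Fin (n + 2)) ℝ) :
    Fin (n + 1) → ℝ := fun i =>
  if i = Fin.last n then (1 / 2) * (z (Fin.last n) 0) ^ 2
  else z (Fin.last n) 0 * (z i 0 - z (Fin.last n) 0)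

/-- Verification of the a-priori boundedness condition (sAB) for `f̃` (`N = n+1 ≥ 1`):
(i) `f̃_k(z) ≤ (1/2) z_{k,1}² ≤ (1/2)|e_kᵀ z|²` for every `k`, and
(ii) `aᵀ f̃(z) ≤ (1/2)|aᵀ z|²` for `a = (1/N, …, 1/N)`.
(Squared Euclidean norms of row vectors are written out as sums of squares.) -/
theorem ftil_sAB (n : ℕ) (z : Matrix (Fin (n + 1)) (Fin (n + 2)) ℝ) :
    (∀ k : Fin (n + 1),
      ftil n z k ≤ (1 / 2) * (z k 0) ^ 2 ∧
      (1 / 2) * (z k 0) ^ 2 ≤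
        (1 / 2) * ∑ j, (Matrix.vecMul (Pi.single k (1 : ℝ)) z j) ^ 2) ∧
    (fun _ : Fin (n + 1) => 1 / ((n : ℝ) + 1)) ⬝ᵥ ftil n z ≤
      (1 / 2) * ∑ j,
        (Matrix.vecMul (fun _ : Fin (n + 1) => 1 / ((n : ℝ) + 1)) z j) ^ 2 := by
  set L := z (Fin.last n) 0 with hL
  constructor
  · intro k
    constructor
    · by_cases hk : k = Fin.last n
      · simp [ftil, hk, hL]
      · simp only [ftil, if_neg hk]
        nlinarith [sq_nonneg (z k 0 - L), sq_nonneg L]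
    · have hv : ∀ j, Matrix.vecMul (Pi.single k (1 : ℝ)) z j = z k j := by
        intro j
        simp [Matrix.vecMul, dotProduct, Pi.single_apply, Finset.sum_ite_eq']
      simp only [hv]
      have h0 : (z k 0) ^ 2 ≤ ∑ j, (z k j) ^ 2 :=
        Finset.single_le_sum (fun j _ => sq_nonneg (z k j)) (Finset.mem_univ 0)
      linarith
  · set a : Fin (n + 1) → ℝ := fun _ => 1 / ((n : ℝ) + 1) with ha
    have hS : ∀ j, Matrix.vecMul a z j = (1 / ((n : ℝ) + 1)) * ∑ i, z i j := by
      intro j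
      simp [Matrix.vecMul, dotProduct, ha, Finset.mul_sum]
    have hterm : (Matrix.vecMul a z 0) ^ 2 ≤ ∑ j, (Matrix.vecMul a z j) ^ 2 :=
      Finset.single_le_sum (f := fun j : Fin (n + 2) => (Matrix.vecMul a z j) ^ 2)
      (fun j _ => sq_nonneg _) (Finset.mem_univ 0)
    have hdot : a ⬝ᵥ ftil n z =
        (1 / ((n : ℝ) + 1)) * (L * ((∑ i, z i 0) - L) - (n : ℝ) * L ^ 2 + (1 / 2) * L ^ 2) := by
      have hsum : ∑ i : Fin n, z i.castSucc 0 = (∑ i, z i 0) - L := by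
        rw [Fin.sum_univ_castSucc (f := fun i => z i 0)]; ring
      simp only [dotProduct, ha]
      rw [Fin.sum_univ_castSucc]
      simp only [ftil, if_pos rfl, ← hL]
      have : ∀ i : Fin n, (if i.castSucc = Fin.last n then (1 / 2) * L ^ 2
          else L * (z i.castSucc 0 - L)) = L * (z i.castSucc 0 - L) := by
        intro i
        rw [if_neg (Fin.castSucc_lt_last i).ne]
      simp only [this, if_true]
      rw [← Finset.mul_sum, ← Finset.mul_sum]
      have h4 : ∑ i : Fin n, (z i.castSucc 0 - L) = (∑ i, z i 0) - L - (n : ℝ) * L := by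
        rw [Finset.sum_sub_distrib, hsum]
        simp [Finset.sum_const]
      rw [h4]; ring
    rw [hdot]
    have h2 : (1 / 2) * (Matrix.vecMul a z 0) ^ 2 ≤
        (1 / 2) * ∑ j, (Matrix.vecMul a z j) ^ 2 := by linarith
    refine le_trans ?_ h2
    rw [hS 0]
    set S := ∑ i, z i 0 with hSdef
    have hn : (0 : ℝ) < (n : ℝ) + 1 := by positivity
    rw [div_mul_eq_mul_div, div_mul_eq_mul_div, one_mul, one_mul, div_le_iff₀ hn]
    have key : 0 ≤ (S - ((n : ℝ) + 1) * L) ^ 2 + ((n : ℝ) + 1) * (n : ℝ) * L ^ 2 := by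
      have : (0 : ℝ) ≤ ((n : ℝ) + 1) * (n : ℝ) * L ^ 2 := by positivity
      nlinarith [sq_nonneg (S - ((n : ℝ) + 1) * L)]
    have : (1 / 2) * ((1 / ((n : ℝ) + 1)) * S) ^ 2 * ((n : ℝ) + 1)
        = S ^ 2 / (2 * ((n : ℝ) + 1)) := by
      field_simp
    rw [this]
    rw [le_div_iff₀ (by positivity : (0:ℝ) < 2 * ((n : ℝ) + 1))]
    nlinarith [key]
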